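/- arXiv:math/0010211 — 2 statements merged into one kernel-verified Lean document; each statement's English description precedes it below -/
import Mathlib

section
/- In ℂ[x,y,z], set p = x²z − y³z² − 3y²z + 2x − 3y − 1, Q = (1/2)y³z² + (3/2)y²z − (1/2)xz + (3/2)y + 1/2, and q = x − Q². Then there is no ℂ-algebra automorphism σ of ℂ[x,y,z] such that σ(⟨p⟩) = ⟨q⟩; that is, although V(p) and V(q) are isomorphic, no algebraic automorphism of ℂ³ takes V(p) onto V(q). -/
/-!
The fibre `p = -1` is singular at `(1, 1, -1)`: `p + 1 ∈ 𝔪²` for the maximal ideal `𝔪` of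
that point. An automorphism `σ` with `σ⟨p⟩ = ⟨q⟩` sends `p` to `q / c` for a constant `c`
(the units of `ℂ[x, y, z]` are constants) and, by the Nullstellensatz, `𝔪` to the
maximal ideal `𝔪_b` of some point `b`. Hence `q + c ∈ 𝔪_b²`, so the gradient of `q` vanishes
at `b`. But the gradient of `q` vanishes nowhere: every fibre of `q` is smooth.
-/

open MvPolynomial

namespace MvPolynomial

variable {k σ : Type*} [Field k]

@[simp]
theorem pderiv_ofNat (i : σ) (n : ℕ) [n.AtLeastTwo] :
    pderiv i (no_index (OfNat.ofNat n) : MvPolynomial σ k) = 0 :=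
  (pderiv i).map_natCast n

theorem eval_pderiv_eq_zero_of_mem_vanishingIdeal_singleton_sq {a : σ → k}
    {f : MvPolynomial σ k} (hf : f ∈ vanishingIdeal k {a} ^ 2) (i : σ) :
    eval a (pderiv i f) = 0 := by
  rw [pow_two] at hf
  refine Submodule.mul_induction_on hf (fun g hg h hh => ?_) (fun g h hg hh => ?_)
  · rw [mem_vanishingIdeal_singleton_iff, aeval_eq_eval] at hg hh
    simp [hg, hh]
  · simp [hg, hh]

theorem sub_sub_sum_pderiv_mem_vanishingIdeal_singleton_sq [Fintype σ] (a : σ → k)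
    (f : MvPolynomial σ k) :
    f - C (eval a f) - ∑ i, C (eval a (pderiv i f)) * (X i - C (a i)) ∈
      vanishingIdeal k {a} ^ 2 := by
  have hX (i : σ) : X i - C (a i) ∈ vanishingIdeal k {a} := by simp
  induction f using MvPolynomial.induction_on with
  | C r => simp
  | add f g hf hg =>
    convert add_mem hf hg using 1
    simp only [map_add, add_mul, Finset.sum_add_distrib]
    ring
  | mul_X f j hf =>
    classical
    set S := ∑ i, C (eval a (pderiv i f)) * (X i - C (a i))
    have hδ : ∑ i, C (eval a (pderiv i (X j))) * (X i - C (a i)) = X j - C (a j) := by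
      simp [pderiv_X, Pi.single_apply]
    have hS : ∑ i, C (eval a (pderiv i (f * X j))) * (X i - C (a i)) =
        C (a j) * S + C (eval a f) * (X j - C (a j)) := by
      rw [← hδ, Finset.mul_sum, Finset.mul_sum, ← Finset.sum_add_distrib]
      refine Finset.sum_congr rfl fun i _ => ?_
      simp only [pderiv_mul, map_add, map_mul, eval_X]
      ring
    have key : f * X j - C (eval a (f * X j)) -
          ∑ i, C (eval a (pderiv i (f * X j))) * (X i - C (a i)) =
        (f - C (eval a f) - S) * X j +
          ∑ i, C (eval a (pderiv i f)) * ((X i - C (a i)) * (X j - C (a j))) := by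
      simp only [hS, ← mul_assoc, ← Finset.sum_mul, map_mul, eval_X, S]
      ring
    rw [key]
    refine add_mem (Ideal.mul_mem_right _ _ hf) (sum_mem fun i _ => Ideal.mul_mem_left _ _ ?_)
    rw [pow_two]
    exact Ideal.mul_mem_mul (hX i) (hX j)

theorem mem_vanishingIdeal_singleton_sq_iff [Fintype σ] {a : σ → k} {f : MvPolynomial σ k} :
    f ∈ vanishingIdeal k {a} ^ 2 ↔ eval a f = 0 ∧ ∀ i, eval a (pderiv i f) = 0 := by
  refine ⟨fun hf => ⟨?_, eval_pderiv_eq_zero_of_mem_vanishingIdeal_singleton_sq hf⟩,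
    fun ⟨hf, hdf⟩ => ?_⟩
  · exact (mem_vanishingIdeal_singleton_iff a f).mp (Ideal.pow_le_self two_ne_zero hf)
  · simpa [hf, hdf] using sub_sub_sum_pderiv_mem_vanishingIdeal_singleton_sq a f

theorem exists_algEquiv_apply_mem_vanishingIdeal_singleton_sq [IsAlgClosed k] [Finite σ]
    (e : MvPolynomial σ k ≃ₐ[k] MvPolynomial σ k) {a : σ → k} {f : MvPolynomial σ k}
    (hf : f ∈ vanishingIdeal k {a} ^ 2) : ∃ b : σ → k, e f ∈ vanishingIdeal k {b} ^ 2 := by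
  obtain ⟨b, hb⟩ := isMaximal_iff_eq_vanishingIdeal_singleton.mp
    (Ideal.map_isMaximal_of_equiv e (p := vanishingIdeal k {a}))
  refine ⟨b, ?_⟩
  rw [← hb, ← Ideal.map_pow]
  exact Ideal.mem_map_of_mem e hf

end MvPolynomial

noncomputable def tomDieckPetrieP : MvPolynomial (Fin 3) ℂ :=
  X 0 ^ 2 * X 2 - X 1 ^ 3 * X 2 ^ 2 - 3 * X 1 ^ 2 * X 2 + 2 * X 0 - 3 * X 1 - 1

noncomputable def tomDieckPetrieQ : MvPolynomial (Fin 3) ℂ :=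
  C (1/2 : ℂ) * X 1 ^ 3 * X 2 ^ 2 + C (3/2 : ℂ) * X 1 ^ 2 * X 2
    - C (1/2 : ℂ) * X 0 * X 2 + C (3/2 : ℂ) * X 1 + C (1/2 : ℂ)

theorem tomDieckPetrieP_add_one_mem_vanishingIdeal_singleton_sq :
    tomDieckPetrieP + 1 ∈ vanishingIdeal ℂ {(![1, 1, -1] : Fin 3 → ℂ)} ^ 2 := by
  rw [mem_vanishingIdeal_singleton_sq_iff]
  refine ⟨by simp [tomDieckPetrieP]; norm_num, fun i => ?_⟩
  fin_cases i <;> simp [tomDieckPetrieP] <;> norm_num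

/- `∂ₓq = 1 + zQ` forces `Q ≠ 0`, so `∂_yQ = (3/2)(yz + 1)²` and
`∂_zQ = y²(yz + 1) + (y² - x)/2` vanish; then `Q = y + 1/2` and `∂ₓq = z/2`, contradicting
`yz = -1`. -/
theorem exists_eval_pderiv_ne_zero_tomDieckPetrie (a : Fin 3 → ℂ) :
    ∃ i, eval a (pderiv i (X 0 - tomDieckPetrieQ ^ 2)) ≠ 0 := by
  by_contra! h
  have hQ_ne_zero : eval a tomDieckPetrieQ ≠ 0 := fun hQ => by simpa [hQ] using h 0
  have hdQ (i : Fin 3) (hi : i ≠ 0) : eval a (pderiv i tomDieckPetrieQ) = 0 := by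
    simpa [hQ_ne_zero, hi] using h i
  have hx := h 0
  have hy := hdQ 1 (by decide)
  have hz := hdQ 2 (by decide)
  simp only [tomDieckPetrieQ, map_add, map_sub, map_mul, map_pow, map_one, Derivation.leibniz,
    Derivation.leibniz_pow, derivation_C, pderiv_X, Pi.single_apply, Fin.reduceEq, ↓reduceIte,
    smul_eq_mul, nsmul_eq_mul, map_natCast, map_zero, eval_X, eval_C] at hx hy hz
  have hyz : a 1 * a 2 + 1 = 0 :=
    pow_eq_zero_iff two_ne_zero |>.mp (by linear_combination (2 / 3 : ℂ) * hy)
  have hxy : a 0 - a 1 ^ 2 = 0 := by linear_combination -2 * hz + 2 * a 1 ^ 2 * hyz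
  have hz0 : a 2 = 0 := by
    linear_combination 2 * hx - ((a 1 * a 2 + 1) ^ 2 - (a 1 * a 2 + 1) + 2) * hyz + a 2 ^ 2 * hxy
  exact one_ne_zero (by linear_combination hyz - a 1 * hz0)

/-- The inequivalence conclusion of Proposition 3.1 for the tom Dieck–Petrie hypersurface
(`x = X 0`, `y = X 1`, `z = X 2`): no `ℂ`-algebra automorphism of `ℂ[x,y,z]` maps
`⟨p⟩` onto `⟨q⟩`. -/
theorem tomDieckPetrie_inequivalence
    (p Q q : MvPolynomial (Fin 3) ℂ)
    (hp : p = X 0 ^ 2 * X 2 - X 1 ^ 3 * X 2 ^ 2 - 3 * X 1 ^ 2 * X 2 + 2 * X 0 - 3 * X 1 - 1)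
    (hQ : Q = C (1/2 : ℂ) * X 1 ^ 3 * X 2 ^ 2 + C (3/2 : ℂ) * X 1 ^ 2 * X 2
        - C (1/2 : ℂ) * X 0 * X 2 + C (3/2 : ℂ) * X 1 + C (1/2 : ℂ))
    (hq : q = X 0 - Q ^ 2) :
    ¬ ∃ σ : MvPolynomial (Fin 3) ℂ ≃ₐ[ℂ] MvPolynomial (Fin 3) ℂ,
      Ideal.map σ (Ideal.span {p}) = Ideal.span {q} := by
  obtain rfl : p = tomDieckPetrieP := hp
  obtain rfl : Q = tomDieckPetrieQ := hQ
  rintro ⟨σ, hσ⟩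
  obtain ⟨w, hw⟩ : ∃ w : (MvPolynomial (Fin 3) ℂ)ˣ, σ tomDieckPetrieP * w = q :=
    Ideal.span_singleton_eq_span_singleton.mp (by rw [← hσ, Ideal.map_span, Set.image_singleton])
  obtain ⟨c, -, hc⟩ := isUnit_iff_eq_C_of_isReduced.mp w.isUnit
  obtain ⟨b, hb⟩ := exists_algEquiv_apply_mem_vanishingIdeal_singleton_sq σ
    tomDieckPetrieP_add_one_mem_vanishingIdeal_singleton_sq
  have hqc : q + C c ∈ vanishingIdeal ℂ {b} ^ 2 := by
    convert Ideal.mul_mem_right (C c) _ hb using 1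
    rw [map_add, map_one, add_mul, one_mul, ← hc, hw]
  obtain ⟨i, hi⟩ := exists_eval_pderiv_ne_zero_tomDieckPetrie b
  have := (mem_vanishingIdeal_singleton_sq_iff.mp hqc).2 i
  rw [map_add, pderiv_C, add_zero, hq] at this
  exact hi this
end

section
/- In ℂ[x,y], set p = x² + y² − 1 and q = x²y − 1. Then: (a) the quotient algebras ℂ[x,y]/⟨p⟩ and ℂ[x,y]/⟨q⟩ are isomorphic as ℂ-algebras; and (b) there is no ℂ-algebra automorphism σ of ℂ[x,y] such that σ(⟨p⟩) = ⟨q⟩. (Indeed, grad(p) vanishes only at the origin, while grad(q) has infinitely many common zeros.) -/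
/-!
With `u = x + iy` and `v = x - iy` the circle becomes the hyperbola `uv = 1`, and the coordinate
rings of `uv = 1` and `x²y = 1` are both `ℂ[x, x⁻¹]`: the substitutions `y ↦ xy` and `y ↦ y²` are
inverse to each other modulo the two equations.

An automorphism `σ` with `σ⟨p⟩ = ⟨q⟩` sends `p` to a constant multiple of `q`, and the bijection of
`ℂ²` it induces carries critical points of `q` to critical points of `p`. But `grad p` vanishes only
at the origin, while `q + 1 = x²y` vanishes to second order along the whole line `x = 0`.
-/

open MvPolynomial

noncomputable section

namespace MvPolynomial

section Quotient

variable {σ τ R : Type*} [CommRing R]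

def quotientAlgEquivOfAeval (I : Ideal (MvPolynomial σ R)) (J : Ideal (MvPolynomial τ R))
    (f : σ → MvPolynomial τ R) (g : τ → MvPolynomial σ R)
    (hf : I ≤ J.comap (aeval f)) (hg : J ≤ I.comap (aeval g))
    (hgf : ∀ i, aeval g (f i) - X i ∈ I) (hfg : ∀ j, aeval f (g j) - X j ∈ J) :
    (MvPolynomial σ R ⧸ I) ≃ₐ[R] MvPolynomial τ R ⧸ J :=
  AlgEquiv.ofAlgHom (Ideal.quotientMapₐ J (aeval f) hf) (Ideal.quotientMapₐ I (aeval g) hg)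
    (Ideal.Quotient.algHom_ext R <| algHom_ext fun j => by
      simpa [Ideal.Quotient.eq] using hfg j)
    (Ideal.Quotient.algHom_ext R <| algHom_ext fun i => by
      simpa [Ideal.Quotient.eq] using hgf i)

def quotientSpanXMulXSubOneAlgEquivPow (n : ℕ) :
    (MvPolynomial (Fin 2) R ⧸ Ideal.span {(X 0 * X 1 - 1 : MvPolynomial (Fin 2) R)}) ≃ₐ[R]
      MvPolynomial (Fin 2) R ⧸ Ideal.span {(X 0 ^ (n + 1) * X 1 - 1 : MvPolynomial (Fin 2) R)} := by
  refine quotientAlgEquivOfAeval _ _ ![X 0, X 0 ^ n * X 1] ![X 0, X 1 ^ (n + 1)] ?_ ?_ ?_ ?_ <;>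
    simp only [Ideal.span_singleton_le_iff_mem, Ideal.mem_comap, Fin.forall_fin_two,
      Ideal.mem_span_singleton, map_sub, map_mul, map_pow, map_one, aeval_X,
      Matrix.cons_val_zero, Matrix.cons_val_one, sub_self, dvd_zero, true_and]
  · exact ⟨1, by ring⟩
  · convert sub_dvd_pow_sub_pow (X 0 * X 1 : MvPolynomial (Fin 2) R) 1 (n + 1) using 1
    ring
  · convert (sub_dvd_pow_sub_pow (X 0 * X 1 : MvPolynomial (Fin 2) R) 1 n).mul_left (X 1)
      using 1
    ring
  · convert (sub_dvd_pow_sub_pow (X 0 ^ (n + 1) * X 1 : MvPolynomial (Fin 2) R) 1 n).mul_left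
      (X 1) using 1
    ring

end Quotient

def quotientSpanCircleAlgEquiv :
    (MvPolynomial (Fin 2) ℂ ⧸ Ideal.span {(X 0 ^ 2 + X 1 ^ 2 - 1 : MvPolynomial (Fin 2) ℂ)})
      ≃ₐ[ℂ] MvPolynomial (Fin 2) ℂ ⧸ Ideal.span {(X 0 * X 1 - 1 : MvPolynomial (Fin 2) ℂ)} := by
  have hi : (C Complex.I : MvPolynomial (Fin 2) ℂ) ^ 2 = -1 := by simp [← C_pow]
  have h2 : 2 * (C (1 / 2) : MvPolynomial (Fin 2) ℂ) = 1 := by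
    rw [← map_ofNat C 2, ← C_mul]; norm_num
  refine quotientAlgEquivOfAeval _ _
    ![C (1 / 2) * (X 0 + X 1), C Complex.I * C (1 / 2) * (X 1 - X 0)]
    ![X 0 + C Complex.I * X 1, X 0 - C Complex.I * X 1] ?_ ?_ ?_ ?_ <;>
    simp only [Ideal.span_singleton_le_iff_mem, Ideal.mem_comap, Fin.forall_fin_two,
      Ideal.mem_span_singleton, map_add, map_sub, map_mul, map_pow, map_one, aeval_X, aeval_C,
      Matrix.cons_val_zero, Matrix.cons_val_one, algebraMap_eq]
  · exact ⟨1, by linear_combination C (1 / 2) ^ 2 * (X 1 - X 0) ^ 2 * hi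
      + (2 * C (1 / 2) + 1) * X 0 * X 1 * h2⟩
  · exact ⟨1, by linear_combination -X 1 ^ 2 * hi⟩
  · exact ⟨⟨0, by linear_combination X 0 * h2⟩,
      ⟨0, by linear_combination -2 * C (1 / 2) * X 1 * hi + X 1 * h2⟩⟩
  · exact ⟨⟨0, by linear_combination C (1 / 2) * (X 1 - X 0) * hi + X 0 * h2⟩,
      ⟨0, by linear_combination -C (1 / 2) * (X 1 - X 0) * hi + X 1 * h2⟩⟩

section CriticalPoint

variable {σ τ K : Type*} [Field K]

theorem eval_comap {R : Type*} [CommSemiring R] (φ : MvPolynomial σ R →ₐ[R] MvPolynomial τ R)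
    (b : τ → R) (g : MvPolynomial σ R) : eval (comap φ b) g = eval b (φ g) :=
  DFunLike.congr_fun (algHom_ext fun i => by simp : aeval (comap φ b) = (aeval b).comp φ) g

/-- The ideal-theoretic form of `grad f (a) = 0`, which algebra homomorphisms visibly transport. -/
def IsCriticalPoint (f : MvPolynomial σ K) (a : σ → K) : Prop :=
  f - C (eval a f) ∈ vanishingIdeal K {a} ^ 2

theorem IsCriticalPoint.eval_pderiv {f : MvPolynomial σ K} {a : σ → K} (h : IsCriticalPoint f a)
    (i : σ) : eval a (pderiv i f) = 0 := by
  suffices ∀ g ∈ vanishingIdeal K {a} ^ 2, eval a (pderiv i g) = 0 by simpa using this _ h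
  intro g hg
  rw [pow_two] at hg
  refine Submodule.mul_induction_on hg (fun u hu v hv => ?_) (fun u v hu hv => ?_)
  · rw [mem_vanishingIdeal_singleton_iff, aeval_eq_eval] at hu hv
    simp [hu, hv]
  · simp [hu, hv]

theorem IsCriticalPoint.mul_C {f : MvPolynomial σ K} {a : σ → K} (h : IsCriticalPoint f a)
    (c : K) : IsCriticalPoint (f * C c) a := by
  have : f * C c - C (eval a (f * C c)) = (f - C (eval a f)) * C c := by
    rw [map_mul, eval_C, C_mul]; ring
  rw [IsCriticalPoint, this]
  exact Ideal.mul_mem_right _ _ h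

theorem IsCriticalPoint.of_comap {φ : MvPolynomial σ K →ₐ[K] MvPolynomial τ K}
    {g : MvPolynomial σ K} {b : τ → K} (h : IsCriticalPoint g (comap φ b)) :
    IsCriticalPoint (φ g) b := by
  have hle : (vanishingIdeal K {comap φ b}).map φ ≤ vanishingIdeal K {b} :=
    Ideal.map_le_iff_le_comap.2 fun u hu => by
      simpa [mem_vanishingIdeal_singleton_iff, eval_comap] using hu
  have := Ideal.pow_right_mono hle 2 (Ideal.map_pow φ _ 2 ▸ Ideal.mem_map_of_mem φ h)
  simpa [IsCriticalPoint, eval_comap] using this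

theorem IsCriticalPoint.comapEquiv_of_map_span_singleton
    (e : MvPolynomial σ K ≃ₐ[K] MvPolynomial σ K) {f g : MvPolynomial σ K}
    (hfg : Ideal.map e (Ideal.span {f}) = Ideal.span {g}) {a : σ → K}
    (ha : IsCriticalPoint g a) : IsCriticalPoint f (comapEquiv e a) := by
  rw [Ideal.map_span, Set.image_singleton, Ideal.span_singleton_eq_span_singleton] at hfg
  obtain ⟨u, hu⟩ := hfg
  obtain ⟨c, -, hc⟩ := isUnit_iff_eq_C_of_isReduced.1 ((u⁻¹).isUnit.map e.symm)
  have hf : f = e.symm g * C c := by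
    rw [← hc, ← map_mul, ← hu, mul_assoc, Units.mul_inv, mul_one, AlgEquiv.symm_apply_apply]
  have ha' : IsCriticalPoint g (comap (e.symm : MvPolynomial σ K →ₐ[K] MvPolynomial σ K)
      (comapEquiv e a)) := by
    rwa [← comapEquiv_symm_coe, Equiv.symm_apply_apply]
  rw [hf]
  exact ha'.of_comap.mul_C c

theorem isCriticalPoint_X_sq_mul_X_sub_one (t : K) :
    IsCriticalPoint (X 0 ^ 2 * X 1 - 1 : MvPolynomial (Fin 2) K) ![0, t] := by
  have hX : X 0 ∈ vanishingIdeal K {(![0, t] : Fin 2 → K)} := by simp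
  have hq : eval ![0, t] (X 0 ^ 2 * X 1 - 1 : MvPolynomial (Fin 2) K) = -1 := by simp
  rw [IsCriticalPoint, hq, C_neg, C_1, pow_two]
  convert Ideal.mul_mem_mul hX (Ideal.mul_mem_right (X 1) _ hX) using 1
  ring

theorem eq_zero_of_isCriticalPoint_X_sq_add_X_sq_sub_one [NeZero (2 : K)] {a : Fin 2 → K}
    (h : IsCriticalPoint (X 0 ^ 2 + X 1 ^ 2 - 1 : MvPolynomial (Fin 2) K) a) : a = 0 := by
  ext i
  fin_cases i
  · simpa [two_ne_zero] using h.eval_pderiv 0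
  · simpa [two_ne_zero] using h.eval_pderiv 1

end CriticalPoint

end MvPolynomial

/-- Example 3.2 of the paper: with `x = X 0`, `y = X 1` in `ℂ[x,y]`, the complex circle
`p = x² + y² - 1` and the curve `q = x²y - 1` give (a) isomorphic quotient algebras,
while (b) no `ℂ`-algebra automorphism of `ℂ[x,y]` maps `⟨p⟩` onto `⟨q⟩`. -/
theorem example_3_2
    (p q : MvPolynomial (Fin 2) ℂ)
    (hp : p = X 0 ^ 2 + X 1 ^ 2 - 1)
    (hq : q = X 0 ^ 2 * X 1 - 1) :
    Nonempty ((MvPolynomial (Fin 2) ℂ ⧸ Ideal.span {p}) ≃ₐ[ℂ]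
      (MvPolynomial (Fin 2) ℂ ⧸ Ideal.span {q})) ∧
    ¬ ∃ σ : MvPolynomial (Fin 2) ℂ ≃ₐ[ℂ] MvPolynomial (Fin 2) ℂ,
      Ideal.map σ (Ideal.span {p}) = Ideal.span {q} := by
  subst hp hq
  refine ⟨⟨quotientSpanCircleAlgEquiv.trans (quotientSpanXMulXSubOneAlgEquivPow 1)⟩, ?_⟩
  rintro ⟨σ, hσ⟩
  have hcomap (t : ℂ) : comapEquiv σ ![0, t] = 0 :=
    eq_zero_of_isCriticalPoint_X_sq_add_X_sq_sub_one
      ((isCriticalPoint_X_sq_mul_X_sub_one t).comapEquiv_of_map_span_singleton σ hσ)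
  have := (comapEquiv σ).injective ((hcomap 0).trans (hcomap 1).symm)
  exact zero_ne_one (congrFun this 1)
end
end
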